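/- arXiv:cs/0703051 — 3 statements merged into one kernel-verified Lean document; each statement's English description precedes it below -/
import Mathlib

section
/- Soundness of the ⊥-6 inconsistency propagation rule: let R be a role, C_1, …, C_λ concepts, and let M be the set of modal constraints consisting of ∃^{≤n_k}R.C_k for k in an index set K≤ and ∃^{≥m_k}R.C_k for k in an index set K≥ (all indices in {1,…,λ}). If the associated system of linear integer inequalities has no solution in nonnegative integers, then there is no interpretation I and no element x of its domain with x ∈ D^I for every D ∈ M; i.e., M is unsatisfiable. -/
namespace ALCQI

/-- A role is a role name or the inverse of a role name. -/
inductive Role (ρ : Type) : Type where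
  | name : ρ → Role ρ
  | inv  : ρ → Role ρ

/-- The (unique) inverse of a role. -/
def Role.inverse {ρ : Type} : Role ρ → Role ρ
  | .name r => .inv r
  | .inv r  => .name r

/-- ALCQI concepts over atomic concept names `α` and role names `ρ`. -/
inductive Concept (α ρ : Type) : Type where
  | top : Concept α ρ
  | atom : α → Concept α ρ
  | neg : Concept α ρ → Concept α ρ
  | and : Concept α ρ → Concept α ρ → Concept α ρ
  | or : Concept α ρ → Concept α ρ → Concept α ρ
  | atMost : ℕ → Role ρ → Concept α ρ → Concept α ρ
  | atLeast : ℕ → Role ρ → Concept α ρ → Concept α ρ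

/-- An interpretation: a nonempty domain, sets for atomic concepts,
    binary relations for role names. -/
structure Interp (α ρ : Type) : Type 1 where
  Δ : Type
  nonempty : Nonempty Δ
  atomI : α → Set Δ
  roleI : ρ → Δ → Δ → Prop

/-- Interpretation of roles; inverse roles are interpreted by the converse relation. -/
def Role.interp {α ρ : Type} (I : Interp α ρ) : Role ρ → I.Δ → I.Δ → Prop
  | .name r => fun x y => I.roleI r x y
  | .inv r  => fun x y => I.roleI r y x

/-- The extension `C^I ⊆ Δ` of a concept, using extended cardinality (`Set.encard`)
    for the qualified number restrictions. -/
def Concept.interp {α ρ : Type} (I : Interp α ρ) : Concept α ρ → Set I.Δ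
  | .top => Set.univ
  | .atom a => I.atomI a
  | .neg C => (C.interp I)ᶜ
  | .and C D => C.interp I ∩ D.interp I
  | .or C D => C.interp I ∪ D.interp I
  | .atMost n R C => {x | {y | R.interp I x y ∧ y ∈ C.interp I}.encard ≤ (n : ℕ∞)}
  | .atLeast n R C => {x | (n : ℕ∞) ≤ {y | R.interp I x y ∧ y ∈ C.interp I}.encard}

/-- Negation normal form: push negations inward so they occur only in front of
    atomic names (or `⊤`). -/
def Concept.nnf {α ρ : Type} : Concept α ρ → Concept α ρ
  | .top => .top
  | .atom a => .atom a
  | .and C D => .and C.nnf D.nnf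
  | .or C D => .or C.nnf D.nnf
  | .atMost n R C => .atMost n R C.nnf
  | .atLeast n R C => .atLeast n R C.nnf
  | .neg .top => .neg .top
  | .neg (.atom a) => .neg (.atom a)
  | .neg (.neg C) => C.nnf
  | .neg (.and C D) => .or (Concept.neg C).nnf (Concept.neg D).nnf
  | .neg (.or C D) => .and (Concept.neg C).nnf (Concept.neg D).nnf
  | .neg (.atMost n R C) => .atLeast (n + 1) R C
  | .neg (.atLeast 0 R C) => .neg .top
  | .neg (.atLeast (n + 1) R C) => .atMost n R C

/-- `I` satisfies the GCI `⊤ ⊑ C` iff `C^I = Δ`. -/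
def Interp.satGCI {α ρ : Type} (I : Interp α ρ) (C : Concept α ρ) : Prop :=
  C.interp I = Set.univ

/-- A set `Γ` of concepts is satisfiable w.r.t. a TBox `T`
    (a set of GCIs `⊤ ⊑ C`, identified with their right-hand sides). -/
def SatWrt {α ρ : Type} (T : Set (Concept α ρ)) (Γ : Set (Concept α ρ)) : Prop :=
  ∃ (I : Interp α ρ) (x : I.Δ), (∀ G ∈ T, I.satGCI G) ∧ ∀ C ∈ Γ, x ∈ C.interp I

/-- The cut formula `∃^{≤0}R⁻.⊤ ⊔ C ⊔ nnf(¬C)` for a role `R` and a concept `C`. -/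
def cutFormula {α ρ : Type} (R : Role ρ) (C : Concept α ρ) : Concept α ρ :=
  .or (.atMost 0 R.inverse .top) (.or C (Concept.neg C).nnf)

/-- soundness of the ⊥-6 rule: if the system of linear integer inequalities
associated with a set `M` of modal constraints on a role `R` has no solution in nonnegative
integers, then `M` is unsatisfiable. -/
theorem bot6_sound {α ρ : Type} (lam : ℕ) (R : Role ρ) (Cf : Fin lam → Concept α ρ)
    (Kle Kge : Finset (Fin lam)) (n m : Fin lam → ℕ)
    (M : Set (Concept α ρ))
    (hM : M = (fun k => Concept.atMost (n k) R (Cf k)) '' ↑Kle ∪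
              (fun k => Concept.atLeast (m k) R (Cf k)) '' ↑Kge)
    (hnosol : ¬ ∃ v : Finset (Fin lam) → ℕ,
        (∀ k ∈ Kle, (∑ S ∈ Finset.univ.filter (fun S => k ∈ S), v S) ≤ n k) ∧
        (∀ k ∈ Kge, m k ≤ ∑ S ∈ Finset.univ.filter (fun S => k ∈ S), v S)) :
    ¬ ∃ (I : Interp α ρ) (x : I.Δ), ∀ D ∈ M, x ∈ D.interp I := by
  classical
  rintro ⟨I, x, hx⟩
  apply hnosol
  let ty : I.Δ → Finset (Fin lam) := fun y => Finset.univ.filter (fun k => y ∈ (Cf k).interp I)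
  let T : Finset (Fin lam) → Set I.Δ := fun S => {y | R.interp I x y ∧ ty y = S}
  let U : Fin lam → Set I.Δ := fun k => {y | R.interp I x y ∧ y ∈ (Cf k).interp I}
  have hty : ∀ (y : I.Δ) (k : Fin lam), k ∈ ty y ↔ y ∈ (Cf k).interp I := by
    intro y k; simp [ty]
  have hle : ∀ k ∈ Kle, (U k).encard ≤ (n k : ℕ∞) := by
    intro k hk
    have := hx (Concept.atMost (n k) R (Cf k)) (by rw [hM]; exact Or.inl ⟨k, hk, rfl⟩)
    simpa [Concept.interp, U] using this
  have hge : ∀ k ∈ Kge, (m k : ℕ∞) ≤ (U k).encard := by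
    intro k hk
    have := hx (Concept.atLeast (m k) R (Cf k)) (by rw [hM]; exact Or.inr ⟨k, hk, rfl⟩)
    simpa [Concept.interp, U] using this
  have hTsub : ∀ (S : Finset (Fin lam)) (k : Fin lam), k ∈ S → T S ⊆ U k := by
    intro S k hkS y hy
    exact ⟨hy.1, (hty y k).1 (hy.2 ▸ hkS)⟩
  let B : ℕ := ∑ k, m k
  let v : Finset (Fin lam) → ℕ := fun S => if h : (T S).Finite then (T S).ncard else B
  have key : ∀ (k : Fin lam) (hUf : (U k).Finite),
      ∑ S ∈ Finset.univ.filter (fun S => k ∈ S), v S = hUf.toFinset.card := by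
    intro k hUf
    have hmap : ∀ y ∈ hUf.toFinset, ty y ∈ Finset.univ.filter (fun S => k ∈ S) := by
      intro y hy
      rw [Set.Finite.mem_toFinset] at hy
      simp only [Finset.mem_filter, Finset.mem_univ, true_and]
      exact (hty y k).2 hy.2
    rw [Finset.card_eq_sum_card_fiberwise hmap]
    apply Finset.sum_congr rfl
    intro S hS
    rw [Finset.mem_filter] at hS
    have hTS : T S = ↑(hUf.toFinset.filter (fun y => ty y = S)) := by
      ext y
      simp only [Finset.coe_filter, Set.mem_setOf_eq, Set.Finite.mem_toFinset]
      constructor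
      · intro hy; exact ⟨hTsub S k hS.2 hy, hy.2⟩
      · intro hy; exact ⟨hy.1.1, hy.2⟩
    have hfin : (T S).Finite := by rw [hTS]; exact (hUf.toFinset.filter _).finite_toSet
    rw [show v S = (T S).ncard from dif_pos hfin, hTS, Set.ncard_coe_finset]
  refine ⟨v, ?_, ?_⟩
  · intro k hk
    have hUf : (U k).Finite := Set.finite_of_encard_le_coe (hle k hk)
    rw [key k hUf]
    have := hle k hk
    rw [hUf.encard_eq_coe_toFinset_card, Nat.cast_le] at this
    exact this
  · intro k hk
    by_cases hall : ∀ S ∈ Finset.univ.filter (fun S : Finset (Fin lam) => k ∈ S), (T S).Finite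
    · have hUf : (U k).Finite := by
        have hsub : U k ⊆ ⋃ S ∈ Finset.univ.filter (fun S : Finset (Fin lam) => k ∈ S), T S := by
          intro y hy
          exact Set.mem_biUnion
            (Finset.mem_filter.2 ⟨Finset.mem_univ _, (hty y k).2 hy.2⟩)
            (show y ∈ T (ty y) from ⟨hy.1, rfl⟩)
        exact Set.Finite.subset (Set.Finite.biUnion (Finset.finite_toSet _)
          (fun S hS => hall S hS)) hsub
      rw [key k hUf]
      have := hge k hk
      rw [hUf.encard_eq_coe_toFinset_card, Nat.cast_le] at this
      exact this
    · push_neg at hall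
      obtain ⟨S, hS, hinf⟩ := hall
      have hvS : v S = B := dif_neg hinf
      calc m k ≤ B := Finset.single_le_sum (fun i _ => Nat.zero_le (m i)) (Finset.mem_univ k)
        _ = v S := hvS.symm
        _ ≤ ∑ S ∈ Finset.univ.filter (fun S => k ∈ S), v S :=
            Finset.single_le_sum (fun i _ => Nat.zero_le (v i)) hS


end ALCQI
end

section
/- Atomic decomposition counting: let I be an interpretation, R a role, C_1, …, C_λ concepts, and x an element of the domain such that the set of R-successors of x that belong to C_i^I for at least one i is finite. For each nonempty subset S ⊆ {1,…,λ}, let v_S be the cardinality of {y | (x,y) ∈ R^I and, for every i ∈ {1,…,λ}, y ∈ C_i^I ⟺ i ∈ S}. Then for every k ∈ {1,…,λ}, the cardinality of {y | (x,y) ∈ R^I and y ∈ C_k^I} equals Σ_{S : k ∈ S} v_S. Consequently, if x ∈ (∃^{≤n_k}R.C_k)^I for every k ∈ K≤ and x ∈ (∃^{≥m_k}R.C_k)^I for every k ∈ K≥, then (v_S) is a nonnegative integer solution of the associated system of linear integer inequalities. -/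
namespace ALCQI

/-- atomic decomposition counting: the number of `R`-successors of `x` in
`C_k^I` is the sum of the cardinalities of the atoms containing `k`; consequently, the
atom cardinalities form a nonnegative integer solution of the associated LII. -/
theorem atomic_decomposition_counting {α ρ : Type} (I : Interp α ρ) (R : Role ρ)
    (lam : ℕ) (Cf : Fin lam → Concept α ρ) (x : I.Δ)
    (hfin : {y | R.interp I x y ∧ ∃ i, y ∈ (Cf i).interp I}.Finite)
    (v : Finset (Fin lam) → ℕ)
    (hv : ∀ S : Finset (Fin lam), S.Nonempty →
        v S = {y | R.interp I x y ∧ ∀ i, y ∈ (Cf i).interp I ↔ i ∈ S}.ncard)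
    (Kle Kge : Finset (Fin lam)) (n m : Fin lam → ℕ) :
    (∀ k : Fin lam,
        {y | R.interp I x y ∧ y ∈ (Cf k).interp I}.ncard =
          ∑ S ∈ Finset.univ.filter (fun S => k ∈ S), v S) ∧
    ((∀ k ∈ Kle, x ∈ (Concept.atMost (n k) R (Cf k)).interp I) →
     (∀ k ∈ Kge, x ∈ (Concept.atLeast (m k) R (Cf k)).interp I) →
     ((∀ k ∈ Kle, (∑ S ∈ Finset.univ.filter (fun S => k ∈ S), v S) ≤ n k) ∧
      (∀ k ∈ Kge, m k ≤ ∑ S ∈ Finset.univ.filter (fun S => k ∈ S), v S))) := by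
  classical
  have hsub : ∀ k : Fin lam, {y | R.interp I x y ∧ y ∈ (Cf k).interp I} ⊆
      {y | R.interp I x y ∧ ∃ i, y ∈ (Cf i).interp I} := by
    intro k y hy; exact ⟨hy.1, k, hy.2⟩
  have hfink : ∀ k : Fin lam, {y | R.interp I x y ∧ y ∈ (Cf k).interp I}.Finite :=
    fun k => hfin.subset (hsub k)
  set F := hfin.toFinset with hF
  have hFmem : ∀ y, y ∈ F ↔ R.interp I x y ∧ ∃ i, y ∈ (Cf i).interp I := by
    intro y; simp [hF, Set.Finite.mem_toFinset]
  have key : ∀ k : Fin lam,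
      {y | R.interp I x y ∧ y ∈ (Cf k).interp I}.ncard =
        ∑ S ∈ Finset.univ.filter (fun S => k ∈ S), v S := by
    intro k
    set T : I.Δ → Finset (Fin lam) :=
      fun y => Finset.univ.filter (fun i => y ∈ (Cf i).interp I) with hT
    have hTmem : ∀ y i, i ∈ T y ↔ y ∈ (Cf i).interp I := by
      intro y i; simp [hT]
    set s : Finset I.Δ := F.filter (fun y => y ∈ (Cf k).interp I) with hs
    have hseq : {y | R.interp I x y ∧ y ∈ (Cf k).interp I} = ↑s := by
      ext y
      simp only [hs, Finset.coe_filter, Set.mem_setOf_eq, hFmem]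
      constructor
      · rintro ⟨h1, h2⟩; exact ⟨⟨h1, k, h2⟩, h2⟩
      · rintro ⟨⟨h1, _⟩, h2⟩; exact ⟨h1, h2⟩
    rw [hseq, Set.ncard_coe_finset]
    have hmap : ∀ y ∈ s, T y ∈ Finset.univ.filter (fun S => k ∈ S) := by
      intro y hy
      simp only [hs, Finset.mem_filter] at hy
      simp only [Finset.mem_filter, Finset.mem_univ, true_and, hTmem]
      exact hy.2
    rw [Finset.card_eq_sum_card_fiberwise hmap]
    apply Finset.sum_congr rfl
    intro S hS
    simp only [Finset.mem_filter, Finset.mem_univ, true_and] at hS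
    rw [hv S ⟨k, hS⟩]
    have : {y | R.interp I x y ∧ ∀ i, y ∈ (Cf i).interp I ↔ i ∈ S} =
        ↑(s.filter (fun y => T y = S)) := by
      ext y
      simp only [hs, Finset.coe_filter, Set.mem_setOf_eq, Finset.mem_filter, hFmem]
      constructor
      · rintro ⟨h1, h2⟩
        have hk : y ∈ (Cf k).interp I := (h2 k).mpr hS
        refine ⟨⟨⟨h1, k, hk⟩, hk⟩, ?_⟩
        ext i; rw [hTmem]; exact h2 i
      · rintro ⟨⟨⟨h1, _⟩, _⟩, h3⟩
        refine ⟨h1, fun i => ?_⟩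
        rw [← h3, hTmem]
      
    rw [this, Set.ncard_coe_finset]
  refine ⟨key, fun hle hge => ⟨?_, ?_⟩⟩
  · intro k hk
    rw [← key k]
    have h := hle k hk
    simp only [Concept.interp, Set.mem_setOf_eq] at h
    have := (hfink k).cast_ncard_eq
    rw [← this] at h
    exact_mod_cast h
  · intro k hk
    rw [← key k]
    have h := hge k hk
    simp only [Concept.interp, Set.mem_setOf_eq] at h
    have := (hfink k).cast_ncard_eq
    rw [← this] at h
    exact_mod_cast h

end ALCQI
end

section
/- Completeness of the inconsistency propagation rules (Lemmas 1 and 2 of the paper): fix concepts G and K and the TBox T = {⊤ ⊑ G, ⊤ ⊑ K}, and let the collection of ⊥-sets be the least collection of sets of ALCQI concepts closed under the rules ⊥-0 through ⊥-6 given in the context. Then every ⊥-set is unsatisfiable w.r.t. T; i.e., if Γ is a ⊥-set then there is no interpretation I satisfying ⊤ ⊑ G and ⊤ ⊑ K together with an element x of its domain belonging to C^I for every C ∈ Γ. -/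
namespace ALCQI

/-- The ⊥-sets: the least collection of sets of concepts closed under the
inconsistency propagation rules ⊥-0, ⊥-1, ⊥-3, ⊥-4, ⊥-5 and ⊥-6
(relative to the fixed GCIs `⊤ ⊑ G` and `⊤ ⊑ K`). -/
inductive BotSet {α ρ : Type} (G K : Concept α ρ) : Set (Concept α ρ) → Prop where
  | bot0 : BotSet G K {Concept.neg Concept.top}
  | bot1 (C : Concept α ρ) : BotSet G K {C, Concept.neg C}
  | bot3 (Γ : Set (Concept α ρ)) :
      BotSet G K (Γ ∪ {G, K}) → BotSet G K Γ
  | bot4 (Γ Γ' : Set (Concept α ρ)) :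
      BotSet G K Γ → Γ ⊆ Γ' → BotSet G K Γ'
  | bot5 (Γ : Set (Concept α ρ)) (C D : Concept α ρ) :
      BotSet G K (Γ ∪ {C}) → BotSet G K (Γ ∪ {D}) →
      BotSet G K (Γ ∪ {Concept.or C D})
  | bot6 (lam : ℕ) (R : Role ρ) (Cf : Fin lam → Concept α ρ)
      (Kle Kge : Finset (Fin lam)) (n m : Fin lam → ℕ)
      (Z : Set (Finset (Fin lam)))
      (hZne : ∀ S ∈ Z, S.Nonempty)
      (hZbot : ∀ S ∈ Z,
        BotSet G K ((Cf '' {i | i ∈ S}) ∪ ((fun i => Concept.neg (Cf i)) '' {i | i ∉ S})))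
      (hnosol : ¬ ∃ v : Finset (Fin lam) → ℕ,
          (∀ S ∈ Z, v S = 0) ∧
          (∀ k ∈ Kle, (∑ S ∈ Finset.univ.filter (fun S => k ∈ S), v S) ≤ n k) ∧
          (∀ k ∈ Kge, m k ≤ ∑ S ∈ Finset.univ.filter (fun S => k ∈ S), v S)) :
      BotSet G K ((fun k => Concept.atMost (n k) R (Cf k)) '' ↑Kle ∪
                  (fun k => Concept.atLeast (m k) R (Cf k)) '' ↑Kge)

open Classical in
private lemma encard_biUnion_of_disjoint' {ι β : Type*} (f : ι → Set β) (T : Finset ι)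
    (hd : (T : Set ι).PairwiseDisjoint f) :
    (⋃ i ∈ T, f i).encard = ∑ i ∈ T, (f i).encard := by
  classical
  induction T using Finset.induction_on with
  | empty => simp
  | @insert a s ha ih =>
    rw [Finset.set_biUnion_insert, Set.encard_union_eq, Finset.sum_insert ha,
      ih (hd.subset (by intro x hx; simp [hx]))]
    rw [Set.disjoint_iUnion₂_right]
    intro i hi
    exact hd (by simp) (by simp [hi]) (fun h => ha (h ▸ hi))

/-- every ⊥-set is unsatisfiable w.r.t. the TBox `{⊤ ⊑ G, ⊤ ⊑ K}`. -/
theorem botSet_unsat {α ρ : Type} (G K : Concept α ρ) (Γ : Set (Concept α ρ))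
    (h : BotSet G K Γ) : ¬ SatWrt {G, K} Γ := by
  induction h with
  | bot0 =>
    rintro ⟨I, x, hT, hx⟩
    have := hx _ rfl
    simp [Concept.interp] at this
  | bot1 C =>
    rintro ⟨I, x, hT, hx⟩
    have h1 := hx C (by simp)
    have h2 := hx (Concept.neg C) (by simp)
    exact h2 h1
  | bot3 Γ hprev ih =>
    rintro ⟨I, x, hT, hx⟩
    apply ih
    refine ⟨I, x, hT, ?_⟩
    rintro C (hC | hC)
    · exact hx C hC
    · rcases hC with hC | hC
      · subst hC
        have := hT C (Or.inl rfl)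
        rw [this]; trivial
      · rcases hC with rfl
        have := hT C (Or.inr rfl)
        rw [this]; trivial
  | bot4 Γ Γ' hΓ hsub ih =>
    rintro ⟨I, x, hT, hx⟩
    exact ih ⟨I, x, hT, fun C hC => hx C (hsub hC)⟩
  | bot5 Γ C D h1 h2 ih1 ih2 =>
    rintro ⟨I, x, hT, hx⟩
    have hor := hx (Concept.or C D) (Or.inr rfl)
    rcases (hor : x ∈ C.interp I ∪ D.interp I) with hC | hD
    · exact ih1 ⟨I, x, hT, by rintro E (hE | rfl); exacts [hx E (Or.inl hE), hC]⟩
    · exact ih2 ⟨I, x, hT, by rintro E (hE | rfl); exacts [hx E (Or.inl hE), hD]⟩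
  | bot6 lam R Cf Kle Kge n m Z hZne hZbot hnosol ih =>
    classical
    rintro ⟨I, x, hT, hx⟩
    -- the constraints at x
    have hle : ∀ k ∈ Kle,
        {y | R.interp I x y ∧ y ∈ (Cf k).interp I}.encard ≤ (n k : ℕ∞) := by
      intro k hk
      exact hx _ (Or.inl ⟨k, hk, rfl⟩)
    have hge : ∀ k ∈ Kge,
        (m k : ℕ∞) ≤ {y | R.interp I x y ∧ y ∈ (Cf k).interp I}.encard := by
      intro k hk
      exact hx _ (Or.inr ⟨k, hk, rfl⟩)
    -- the "type" of an element and the fillers of each type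
    set tp : I.Δ → Finset (Fin lam) :=
      fun y => Finset.univ.filter (fun i => y ∈ (Cf i).interp I) with htp
    set F : Finset (Fin lam) → Set I.Δ :=
      fun S => {y | R.interp I x y ∧ tp y = S} with hF
    have hFdisj : (Set.univ : Set (Finset (Fin lam))).PairwiseDisjoint F := by
      intro S _ T _ hST
      simp only [Function.onFun]
      rw [Set.disjoint_left]
      rintro y ⟨_, hyS⟩ ⟨_, hyT⟩
      exact hST (hyS ▸ hyT ▸ rfl)
    -- types in Z are not realized
    have hFZ : ∀ S ∈ Z, F S = ∅ := by
      intro S hS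
      rw [Set.eq_empty_iff_forall_notMem]
      rintro y ⟨hR, hty⟩
      apply ih S hS
      refine ⟨I, y, hT, ?_⟩
      rintro C (⟨i, hi, rfl⟩ | ⟨i, hi, rfl⟩)
      · have : i ∈ tp y := hty ▸ hi
        simpa [htp] using this
      · intro hyc
        have : i ∈ tp y := by simpa [htp] using hyc
        exact hi (hty ▸ this)
    -- partition of the fillers of Cf k by type
    have hcard : ∀ k : Fin lam,
        {y | R.interp I x y ∧ y ∈ (Cf k).interp I}.encard =
          ∑ S ∈ Finset.univ.filter (fun S => k ∈ S), (F S).encard := by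
      intro k
      rw [← encard_biUnion_of_disjoint' F _ (hFdisj.subset (Set.subset_univ _))]
      congr 1
      ext y
      simp only [Set.mem_iUnion, Set.mem_setOf_eq, Finset.mem_filter, Finset.mem_univ,
        true_and]
      constructor
      · rintro ⟨hR, hC⟩
        exact ⟨tp y, by simp [htp, hC], hR, rfl⟩
      · rintro ⟨S, hkS, hR, hty⟩
        refine ⟨hR, ?_⟩
        have : k ∈ tp y := hty ▸ hkS
        simpa [htp] using this
    -- the solution
    set M : ℕ := Finset.univ.sup m with hM
    refine hnosol ⟨fun S => (min ((F S).encard) (M : ℕ∞)).toNat, ?_, ?_, ?_⟩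
    · intro S hS
      simp [hFZ S hS]
    · intro k hk
      have hcast : ((∑ S ∈ Finset.univ.filter (fun S => k ∈ S),
          (min ((F S).encard) (M : ℕ∞)).toNat : ℕ) : ℕ∞) ≤ (n k : ℕ∞) := by
        push_cast
        calc ∑ S ∈ Finset.univ.filter (fun S => k ∈ S),
              ((min ((F S).encard) (M : ℕ∞)).toNat : ℕ∞)
            ≤ ∑ S ∈ Finset.univ.filter (fun S => k ∈ S), (F S).encard := by
              refine Finset.sum_le_sum fun S _ => ?_
              exact le_trans (ENat.coe_toNat_le_self _) (min_le_left _ _)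
          _ = _ := (hcard k).symm
          _ ≤ (n k : ℕ∞) := hle k hk
      exact_mod_cast hcast
    · intro k hk
      by_cases hbig : ∃ S ∈ Finset.univ.filter (fun S => k ∈ S),
          (M : ℕ∞) ≤ (F S).encard
      · obtain ⟨S, hS, hSbig⟩ := hbig
        have hvS : (min ((F S).encard) (M : ℕ∞)).toNat = M := by
          rw [min_eq_right hSbig]; simp
        calc m k ≤ M := Finset.le_sup (Finset.mem_univ k)
          _ = (min ((F S).encard) (M : ℕ∞)).toNat := hvS.symm
          _ ≤ _ := Finset.single_le_sum (f := fun S => (min ((F S).encard) (M : ℕ∞)).toNat) (fun _ _ => Nat.zero_le _) hS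
      · push_neg at hbig
        have hcast : (m k : ℕ∞) ≤ ((∑ S ∈ Finset.univ.filter (fun S => k ∈ S),
            (min ((F S).encard) (M : ℕ∞)).toNat : ℕ) : ℕ∞) := by
          push_cast
          calc (m k : ℕ∞) ≤ _ := hge k hk
            _ = ∑ S ∈ Finset.univ.filter (fun S => k ∈ S), (F S).encard := hcard k
            _ = ∑ S ∈ Finset.univ.filter (fun S => k ∈ S),
                ((min ((F S).encard) (M : ℕ∞)).toNat : ℕ∞) := by
              refine Finset.sum_congr rfl fun S hS => ?_
              have hlt := hbig S hS
              rw [min_eq_left hlt.le, ENat.coe_toNat (by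
                intro htop; rw [htop] at hlt; exact (not_top_lt hlt))]
        exact_mod_cast hcast

end ALCQI
end
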